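/- (Core of Lemma 6.6.) Let A = ∏_{b∈B} b, C = ∏_{b∈B} (y + b) and D = ∏_{b∈B} (y + X_0 + b) in R = MvPolynomial (Fin k) (ZMod 2). Then for every integer m ≥ 1, the identity A^m + C^m + D^m = 0 holds in R if and only if m is a power of 2. -/

import Mathlib

open MvPolynomial

/-- Additivity of the "subspace product" `z ↦ ∏_{T ⊆ s} (z + ∑_{i ∈ T} f i)` in a
commutative ring of characteristic two. -/
lemma powerset_prod_add {R : Type*} [CommRing R] (htwo : (2 : R) = 0) {ι : Type*}
    [DecidableEq ι] (f : ι → R) (s : Finset ι) :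
    ∀ u v : R, (∏ T ∈ s.powerset, (u + v + ∑ i ∈ T, f i))
      = (∏ T ∈ s.powerset, (u + ∑ i ∈ T, f i)) + ∏ T ∈ s.powerset, (v + ∑ i ∈ T, f i) := by
  induction s using Finset.induction_on with
  | empty => intro u v; simp
  | @insert a s ha ih =>
    intro u v
    have key : ∀ w : R, ∏ T ∈ (insert a s).powerset, (w + ∑ i ∈ T, f i)
        = (∏ T ∈ s.powerset, (w + ∑ i ∈ T, f i)) *
          ∏ T ∈ s.powerset, (w + f a + ∑ i ∈ T, f i) := by
      intro w
      rw [Finset.prod_powerset_insert ha]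
      congr 1
      refine Finset.prod_congr rfl fun T hT => ?_
      rw [Finset.sum_insert (fun haT => ha (Finset.mem_powerset.mp hT haT))]
      ring
    rw [key, key, key, ih u v, show u + v + f a = u + (v + f a) by ring, ih u (v + f a),
      ih v (f a), ih u (f a)]
    set Pu := ∏ T ∈ s.powerset, (u + ∑ i ∈ T, f i)
    set Pv := ∏ T ∈ s.powerset, (v + ∑ i ∈ T, f i)
    set Pa := ∏ T ∈ s.powerset, (f a + ∑ i ∈ T, f i)
    linear_combination Pu * Pv * htwo

set_option maxHeartbeats 1000000 in
/-- Core of Lemma 6.6: with `A = ∏_{b∈B} b`, `C = ∏_{b∈B} (y+b)`,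
`D = ∏_{b∈B} (y + X 0 + b)` (where `B` is the multiset of odd-subset sums of
`X 0, ..., X (k-2)` and `y = X (k-1)`), for every `m ≥ 1` the identity
`A^m + C^m + D^m = 0` holds in `MvPolynomial (Fin k) (ZMod 2)` iff `m` is a power of 2. -/
theorem multiplicity_power_of_two (k : ℕ) (hk : 2 ≤ k)
    (y : MvPolynomial (Fin k) (ZMod 2)) (hy : y = X ⟨k - 1, by omega⟩)
    (B : Multiset (MvPolynomial (Fin k) (ZMod 2)))
    (hB : B = (Finset.univ.filter
        (fun S : Finset (Fin k) => Odd S.card ∧ ∀ i ∈ S, (i : ℕ) < k - 1)).val.map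
        (fun S => ∑ i ∈ S, X i))
    (A C D : MvPolynomial (Fin k) (ZMod 2))
    (hA : A = B.prod)
    (hC : C = (B.map (fun b => y + b)).prod)
    (hD : D = (B.map (fun b => y + X ⟨0, by omega⟩ + b)).prod)
    (m : ℕ) (hm : 1 ≤ m) :
    A ^ m + C ^ m + D ^ m = 0 ↔ ∃ s : ℕ, m = 2 ^ s := by
  classical
  have htwo : (2 : MvPolynomial (Fin k) (ZMod 2)) = 0 := by
    have h := CharP.cast_eq_zero (MvPolynomial (Fin k) (ZMod 2)) 2
    exact_mod_cast h
  set i0 : Fin k := ⟨0, by omega⟩ with hi0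
  have hD' : D = (B.map (fun b => y + X i0 + b)).prod := hD
  set Bset := Finset.univ.filter
      (fun S : Finset (Fin k) => Odd S.card ∧ ∀ i ∈ S, (i : ℕ) < k - 1) with hBsetdef
  set sIn := Finset.univ.filter (fun i : Fin k => 0 < (i : ℕ) ∧ (i : ℕ) < k - 1) with hsIndef
  -- the key reindexing: products over odd subsets = products over subsets of inner indices
  have key : ∀ c : MvPolynomial (Fin k) (ZMod 2),
      (∏ S ∈ Bset, (c + ∑ i ∈ S, X i))
        = ∏ T ∈ sIn.powerset, (c + X i0 + ∑ i ∈ T, (X i0 + X i)) := by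
    intro c
    refine Finset.prod_nbij' (fun S => S.erase i0)
      (fun T => if Even T.card then insert i0 T else T) ?_ ?_ ?_ ?_ ?_
    · intro S hS
      obtain ⟨-, hodd, hlt⟩ := Finset.mem_filter.mp hS
      rw [Finset.mem_powerset]
      intro i hi
      obtain ⟨hne, hiS⟩ := Finset.mem_erase.mp hi
      have h1 : (i : ℕ) ≠ 0 := fun h => hne (Fin.ext (by simp [hi0, h]))
      have h2 : (i : ℕ) < k - 1 := hlt i hiS
      simp only [hsIndef, Finset.mem_filter, Finset.mem_univ, true_and]
      omega
    · intro T hT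
      rw [Finset.mem_powerset] at hT
      have hTs : ∀ i ∈ T, 0 < (i : ℕ) ∧ (i : ℕ) < k - 1 := fun i hi => by
        have := hT hi
        simpa [hsIndef] using this
      have hi0T : i0 ∉ T := fun h => by
        have := (hTs i0 h).1
        simp [hi0] at this
      by_cases hE : Even T.card
      · rw [if_pos hE, hBsetdef, Finset.mem_filter]
        refine ⟨Finset.mem_univ _, ?_, ?_⟩
        · rw [Finset.card_insert_of_notMem hi0T]
          exact hE.add_one
        · intro i hi
          rcases Finset.mem_insert.mp hi with rfl | h
          · simp only [hi0]; omega
          · exact (hTs i h).2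
      · rw [if_neg hE, hBsetdef, Finset.mem_filter]
        exact ⟨Finset.mem_univ _, Nat.not_even_iff_odd.mp hE, fun i hi => (hTs i hi).2⟩
    · intro S hS
      obtain ⟨-, hodd, hlt⟩ := Finset.mem_filter.mp hS
      by_cases h0 : i0 ∈ S
      · have hc : (S.erase i0).card = S.card - 1 := Finset.card_erase_of_mem h0
        have hEv : Even (S.erase i0).card := by
          obtain ⟨q, hq⟩ := hodd
          rw [hc, hq]
          exact ⟨q, by omega⟩
        rw [if_pos hEv, Finset.insert_erase h0]
      · rw [Finset.erase_eq_of_notMem h0, if_neg (fun hE => (Nat.not_odd_iff_even.mpr hE) hodd)]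
    · intro T hT
      rw [Finset.mem_powerset] at hT
      have hi0T : i0 ∉ T := fun h => by
        have := hT h
        simp [hsIndef, hi0] at this
      by_cases hE : Even T.card
      · rw [if_pos hE, Finset.erase_insert hi0T]
      · rw [if_neg hE, Finset.erase_eq_of_notMem hi0T]
    · intro S hS
      obtain ⟨-, hodd, hlt⟩ := Finset.mem_filter.mp hS
      have hsum : ∑ i ∈ S.erase i0, (X i0 + X i)
          = (S.erase i0).card • (X i0 : MvPolynomial (Fin k) (ZMod 2))
            + ∑ i ∈ S.erase i0, X i := by
        rw [Finset.sum_add_distrib, Finset.sum_const]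
      by_cases h0 : i0 ∈ S
      · have hc : (S.erase i0).card = S.card - 1 := Finset.card_erase_of_mem h0
        obtain ⟨q, hq⟩ := hodd
        have hc2 : (S.erase i0).card = 2 * q := by omega
        have hz : (S.erase i0).card • (X i0 : MvPolynomial (Fin k) (ZMod 2)) = 0 := by
          rw [hc2, nsmul_eq_mul]
          push_cast
          rw [htwo]
          ring
        have hs2 : X i0 + ∑ i ∈ S.erase i0, X i = ∑ i ∈ S, X i :=
          Finset.add_sum_erase S (fun i => (X i : MvPolynomial (Fin k) (ZMod 2))) h0
        rw [hsum, hz, ← hs2]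
        ring
      · rw [Finset.erase_eq_of_notMem h0] at hsum ⊢
        obtain ⟨q, hq⟩ := hodd
        have hz : S.card • (X i0 : MvPolynomial (Fin k) (ZMod 2)) = X i0 := by
          rw [hq, nsmul_eq_mul]
          push_cast
          rw [htwo]
          ring
        rw [hsum, hz]
        linear_combination (-(X i0 : MvPolynomial (Fin k) (ZMod 2))) * htwo
  -- express A, C, D as products over Bset
  have hAB : A = ∏ S ∈ Bset, (∑ i ∈ S, X i) := by
    rw [hA, hB, ← Finset.prod_eq_multiset_prod]
  have hCB : C = ∏ S ∈ Bset, (y + ∑ i ∈ S, X i) := by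
    rw [hC, hB, Multiset.map_map]
    rw [← Finset.prod_eq_multiset_prod]
    rfl
  have hDB : D = ∏ S ∈ Bset, (y + X i0 + ∑ i ∈ S, X i) := by
    rw [hD', hB, Multiset.map_map]
    rw [← Finset.prod_eq_multiset_prod]
    rfl
  -- express via powerset products
  have hAs : A = ∏ T ∈ sIn.powerset, (X i0 + ∑ i ∈ T, (X i0 + X i)) := by
    rw [hAB]
    have h := key 0
    simpa using h
  have hCs : C = ∏ T ∈ sIn.powerset, (y + X i0 + ∑ i ∈ T, (X i0 + X i)) := by
    rw [hCB]; exact key y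
  have hDs : D = ∏ T ∈ sIn.powerset, (y + ∑ i ∈ T, (X i0 + X i)) := by
    rw [hDB, key (y + X i0)]
    refine Finset.prod_congr rfl fun T _ => ?_
    linear_combination (X i0 : MvPolynomial (Fin k) (ZMod 2)) * htwo
  -- the fundamental linear relation
  have hCAD : C = A + D := by
    rw [hCs, hAs, hDs, powerset_prod_add htwo (fun i => X i0 + X i) sIn y (X i0)]
    ring
  -- factor m = 2^s' * t with t odd
  obtain ⟨s', t, hndvd, hmt⟩ :=
    Nat.exists_eq_pow_mul_and_not_dvd (show m ≠ 0 by omega) 2 (by norm_num)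
  have ht0 : t ≠ 0 := by rintro rfl; simp at hmt; omega
  have htodd : t % 2 = 1 := by
    rcases Nat.mod_two_eq_zero_or_one t with h | h
    · exact absurd (Nat.dvd_of_mod_eq_zero h) hndvd
    · exact h
  haveI : Fact (Nat.Prime 2) := ⟨Nat.prime_two⟩
  have hfrob : A ^ m + C ^ m + D ^ m = (A ^ t + C ^ t + D ^ t) ^ 2 ^ s' := by
    rw [hmt, add_pow_char_pow, add_pow_char_pow, ← pow_mul, ← pow_mul, ← pow_mul]
    ring
  have hdom : A ^ m + C ^ m + D ^ m = 0 ↔ A ^ t + C ^ t + D ^ t = 0 := by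
    rw [hfrob, pow_eq_zero_iff (a := A ^ t + C ^ t + D ^ t) (pow_ne_zero s' two_ne_zero)]
  by_cases htone : t = 1
  · subst htone
    have hzero : A + C + D = 0 := by
      rw [hCAD]
      linear_combination (A + D) * htwo
    constructor
    · intro _
      exact ⟨s', by omega⟩
    · intro _
      rw [hdom]
      simpa using hzero
  · have ht3 : 3 ≤ t := by omega
    have hnot2 : ¬ ∃ s'' : ℕ, m = 2 ^ s'' := by
      rintro ⟨σ, hσ⟩
      have hdvd : t ∣ 2 ^ σ := ⟨2 ^ s', by rw [← hσ, hmt]; ring⟩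
      obtain ⟨j, hj, hje⟩ := (Nat.dvd_prime_pow Nat.prime_two).mp hdvd
      rcases Nat.eq_zero_or_pos j with rfl | hjpos
      · simp at hje; omega
      · have : 2 ∣ t := hje ▸ dvd_pow_self 2 (by omega)
        omega
    -- the nonvanishing argument via the auxiliary polynomial map
    have hne : A ^ t + C ^ t + D ^ t ≠ 0 := by
      set φ : MvPolynomial (Fin k) (ZMod 2) →ₐ[ZMod 2]
          Polynomial (MvPolynomial (Fin k) (ZMod 2)) :=
        aeval (fun i : Fin k => if (i : ℕ) = k - 1 then Polynomial.X
          else Polynomial.C (X i)) with hφdef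
      have hφX : ∀ i : Fin k, φ (X i) = if (i : ℕ) = k - 1 then Polynomial.X
          else Polynomial.C (X i) := fun i => aeval_X _ i
      have hφy : φ y = Polynomial.X := by
        rw [hy, hφX]
        simp
      have hφx0 : φ (X i0) = Polynomial.C (X i0) := by
        rw [hφX, if_neg]
        simp only [hi0]
        omega
      have hφinner : ∀ S ∈ Bset, φ (∑ i ∈ S, X i) = Polynomial.C (∑ i ∈ S, X i) := by
        intro S hS
        obtain ⟨-, -, hlt⟩ := Finset.mem_filter.mp hS
        rw [map_sum, map_sum]
        refine Finset.sum_congr rfl fun i hi => ?_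
        rw [hφX, if_neg]
        have := hlt i hi
        omega
      have hφA : φ A = Polynomial.C A := by
        rw [hAB, map_prod, map_prod]
        exact Finset.prod_congr rfl hφinner
      obtain ⟨P, hPdef⟩ : ∃ P, P = φ D := ⟨_, rfl⟩
      have hφD : P = ∏ S ∈ Bset,
          (Polynomial.X + Polynomial.C (X i0 + ∑ i ∈ S, X i)) := by
        rw [hPdef, hDB, map_prod]
        refine Finset.prod_congr rfl fun S hS => ?_
        rw [map_add, map_add, hφy, hφx0, hφinner S hS, map_add]
        ring
      have hPmonic : P.Monic := by
        rw [hφD]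
        exact Polynomial.monic_prod_of_monic _ _ fun S _ => Polynomial.monic_X_add_C _
      obtain ⟨N, hNdef⟩ : ∃ N, N = Bset.card := ⟨_, rfl⟩
      have hPdeg : P.natDegree = N := by
        rw [hφD, Polynomial.natDegree_prod_of_monic _ _
          (fun S _ => Polynomial.monic_X_add_C _)]
        rw [Finset.sum_congr rfl (fun S _ => Polynomial.natDegree_X_add_C _),
          Finset.sum_const, smul_eq_mul, mul_one, hNdef]
      have hN1 : 1 ≤ N := by
        rw [hNdef]
        refine Finset.card_pos.mpr ⟨{i0}, ?_⟩
        rw [hBsetdef, Finset.mem_filter]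
        refine ⟨Finset.mem_univ _, by simp, ?_⟩
        intro i hi
        rw [Finset.mem_singleton.mp hi]
        simp only [hi0]
        omega
      have h22 : (2 : ZMod 2) = 0 := by
        have h := CharP.cast_eq_zero (ZMod 2) 2
        exact_mod_cast h
      have hA0 : A ≠ 0 := by
        intro h
        have hev : eval (fun _ : Fin k => (1 : ZMod 2)) A = 1 := by
          rw [hAB, map_prod]
          refine Finset.prod_eq_one fun S hS => ?_
          obtain ⟨-, hodd, -⟩ := Finset.mem_filter.mp hS
          rw [map_sum]
          simp only [eval_X]
          rw [Finset.sum_const, nsmul_eq_mul, mul_one]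
          obtain ⟨q, hq⟩ := hodd
          rw [hq]
          push_cast
          rw [h22]
          ring
        rw [h, map_zero] at hev
        simp at hev
      intro hzero
      rw [hCAD] at hzero
      have himg : Polynomial.C A ^ t + (Polynomial.C A + P) ^ t + P ^ t = 0 := by
        have h := congrArg φ hzero
        rwa [map_add, map_add, map_pow, map_pow, map_pow, map_add, hφA, ← hPdef,
          map_zero] at h
      obtain ⟨d, hddef⟩ : ∃ d, d = (t - 1) * N := ⟨_, rfl⟩
      have hd0 : d ≠ 0 := by
        have h1 : 0 < (t - 1) * N := Nat.mul_pos (by omega) (by omega)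
        omega
      have hcoeff := congrArg (fun p => Polynomial.coeff p d) himg
      simp only [Polynomial.coeff_add, Polynomial.coeff_zero] at hcoeff
      have hc1 : ((Polynomial.C A) ^ t).coeff d = 0 := by
        rw [← map_pow, Polynomial.coeff_C, if_neg hd0]
      have hcastt : ((t : ℕ) : Polynomial (MvPolynomial (Fin k) (ZMod 2))) = 1 := by
        have h2X : (2 : Polynomial (MvPolynomial (Fin k) (ZMod 2))) = 0 := by
          have h := CharP.cast_eq_zero (Polynomial (MvPolynomial (Fin k) (ZMod 2))) 2
          exact_mod_cast h
        have hq : t = 2 * (t / 2) + 1 := by omega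
        rw [hq]
        push_cast
        rw [h2X]
        ring
      have hmid : ((Polynomial.C A + P) ^ t).coeff d = (P ^ t).coeff d + A := by
        rw [add_pow, Polynomial.finset_sum_coeff]
        have hsplit : Finset.range (t + 1) = insert 0 (insert 1 (Finset.Ico 2 (t + 1))) := by
          ext j
          simp only [Finset.mem_range, Finset.mem_insert, Finset.mem_Ico]
          omega
        rw [hsplit, Finset.sum_insert (by simp), Finset.sum_insert (by simp)]
        have hrest : ∀ j ∈ Finset.Ico 2 (t + 1),
            ((Polynomial.C A) ^ j * P ^ (t - j)
              * ((t.choose j : ℕ) : Polynomial (MvPolynomial (Fin k) (ZMod 2)))).coeff d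
              = 0 := by
          intro j hj
          obtain ⟨hj2, hjt⟩ := Finset.mem_Ico.mp hj
          apply Polynomial.coeff_eq_zero_of_natDegree_lt
          have b1 : ((Polynomial.C A) ^ j).natDegree ≤ 0 := by
            refine le_trans Polynomial.natDegree_pow_le ?_
            simp [Polynomial.natDegree_C]
          have b2 : (P ^ (t - j)).natDegree ≤ (t - j) * N := by
            refine le_trans Polynomial.natDegree_pow_le ?_
            rw [hPdeg]
          have b3 : (((t.choose j : ℕ) :
              Polynomial (MvPolynomial (Fin k) (ZMod 2)))).natDegree = 0 :=
            Polynomial.natDegree_natCast _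
          have hb : ((Polynomial.C A) ^ j * P ^ (t - j)
              * ((t.choose j : ℕ) : Polynomial (MvPolynomial (Fin k) (ZMod 2)))).natDegree
              ≤ (t - j) * N := by
            refine le_trans Polynomial.natDegree_mul_le ?_
            rw [b3, add_zero]
            refine le_trans Polynomial.natDegree_mul_le ?_
            simpa using add_le_add b1 b2
          have hlt2 : (t - j) * N < d := by
            rw [hddef]
            exact Nat.mul_lt_mul_of_lt_of_le (by omega) le_rfl (by omega)
          exact lt_of_le_of_lt hb hlt2
        rw [Finset.sum_eq_zero hrest, add_zero]
        have h0term : (Polynomial.C A) ^ 0 * P ^ (t - 0)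
            * ((t.choose 0 : ℕ) : Polynomial (MvPolynomial (Fin k) (ZMod 2))) = P ^ t := by
          simp
        have h1term : (Polynomial.C A) ^ 1 * P ^ (t - 1)
            * ((t.choose 1 : ℕ) : Polynomial (MvPolynomial (Fin k) (ZMod 2)))
            = Polynomial.C A * P ^ (t - 1) := by
          rw [Nat.choose_one_right, hcastt, pow_one, mul_one]
        rw [h0term, h1term]
        have hdeg1 : (P ^ (t - 1)).natDegree = d := by
          rw [hPmonic.natDegree_pow, hPdeg, hddef]
        have hco : (Polynomial.C A * P ^ (t - 1)).coeff d = A := by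
          rw [Polynomial.coeff_C_mul, ← hdeg1, (hPmonic.pow (t - 1)).coeff_natDegree,
            mul_one]
        rw [hco]
      rw [hc1, hmid] at hcoeff
      have : A = 0 := by linear_combination hcoeff - (P ^ t).coeff d * htwo
      exact hA0 this
    rw [hdom]
    exact iff_of_false hne hnot2
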